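/- arXiv:math/0009061 — 2 statements merged into one kernel-verified Lean document; each statement's English description precedes it below -/
import Mathlib

section
/- The rank of the (l+2)×2l integer matrix B whose i-th row (1 ≤ i ≤ l) is e_i + e_{2l−i+1}, whose (l+1)-th row is (c_{11},c_{21},...,c_{l1},c_{l2},...,c_{22},c_{12}), and whose (l+2)-th row is (c_{12},c_{22},...,c_{l2},c_{l1},...,c_{21},c_{11}), equals l if c_{i1} = c_{i2} for all i = 1,...,l, and equals l+1 otherwise. -/
open MvPolynomial Finset

/-- Reversal of a vector in `ℕ^n`. -/
def revVec {n : ℕ} (ν : Fin n → ℕ) : Fin n → ℕ := fun j => ν j.rev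

/-- First row of the matrix `A`: `(c₁₁, c₂₁, …, c_{l1}, c_{l2}, …, c₂₂, c₁₂)`,
where `a i = c_{i1}` and `b i = c_{i2}` (0-indexed). -/
def row1 {l : ℕ} (a b : Fin l → ℤ) (j : Fin (2*l)) : ℤ :=
  if h : (j : ℕ) < l then a ⟨j, h⟩ else b ⟨2*l - 1 - j, by have := j.isLt; omega⟩

/-- Second row of `A`, which is the reversal of the first row. -/
def row2 {l : ℕ} (a b : Fin l → ℤ) (j : Fin (2*l)) : ℤ := row1 a b j.rev

/-- The set `M_A` of all `ν ∈ ℕ^{2l}` with `A·ν = (k,k)ᵀ` for some `k ∈ ℕ`. -/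
def MA {l : ℕ} (a b : Fin l → ℤ) : Set (Fin (2*l) → ℕ) :=
  {ν | ∃ k : ℕ, (∑ j, row1 a b j * (ν j : ℤ)) = (k : ℤ) ∧
                (∑ j, row2 a b j * (ν j : ℤ)) = (k : ℤ)}

/-- The `(l+2) × 2l` matrix `B`: the first `l` rows are `e_i + e_{2l-i+1}`, the last
two rows are the two rows of `A` (viewed over `ℚ`). -/
noncomputable def Bmat {l : ℕ} (a b : Fin l → ℤ) : Matrix (Fin (l+2)) (Fin (2*l)) ℚ :=
  fun i j =>
    if (i : ℕ) < l then (if (j : ℕ) = (i : ℕ) ∨ (j : ℕ) = 2*l - 1 - (i : ℕ) then 1 else 0)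
    else if (i : ℕ) = l then (row1 a b j : ℚ) else (row2 a b j : ℚ)

/-! The first `l` rows of `B` span the palindromic vectors (`v ∘ rev = v`) of `ℚ^{2l}`,
i.e. the vectors factoring through the fold `j ↦ min j (2l-1-j)`, a space of dimension `l`.
The last row is the reversal of the row `w` above it, and `w + w ∘ rev` is palindromic, so the
rank is `l` or `l + 1` according as `w` is palindromic or not; and `w` is palindromic exactly
when `c_{i1} = c_{i2}` for all `i`. -/

open LinearMap Submodule

lemma span_range_funLeft_single {R m n : Type*} [Semiring R] [Fintype n] [DecidableEq n]
    (f : m → n) :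
    span R (Set.range fun i => funLeft R R f (Pi.single i 1)) = range (funLeft R R f) := by
  rw [range_eq_map, ← (Pi.basisFun R n).span_eq, Submodule.map_span, ← Set.range_comp]
  simp [Function.comp_def]

section FoldHalf

variable {l : ℕ}

def foldHalf (j : Fin (2 * l)) : Fin l :=
  if h : (j : ℕ) < l then ⟨j, h⟩ else ⟨2 * l - 1 - j, by omega⟩

lemma foldHalf_eq_iff (j : Fin (2 * l)) (i : Fin l) :
    foldHalf j = i ↔ (j : ℕ) = i ∨ (j : ℕ) = 2 * l - 1 - i := by
  unfold foldHalf
  split_ifs <;> simp only [Fin.ext_iff] <;> omega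

lemma foldHalf_rev (j : Fin (2 * l)) : foldHalf j.rev = foldHalf j := by
  rw [foldHalf_eq_iff, Fin.val_rev]
  unfold foldHalf
  split_ifs <;> simp only <;> omega

lemma foldHalf_castLE (i : Fin l) : foldHalf (i.castLE (by omega : l ≤ 2 * l)) = i := by
  simp [foldHalf_eq_iff]

lemma castLE_foldHalf (j : Fin (2 * l)) :
    (foldHalf j).castLE (by omega) = j ∨ (foldHalf j).castLE (by omega) = j.rev := by
  unfold foldHalf
  split_ifs
  · exact .inl rfl
  · exact .inr (Fin.ext (by simp only [Fin.val_castLE, Fin.val_rev]; omega))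

lemma foldHalf_surjective : Function.Surjective (foldHalf (l := l)) :=
  fun i => ⟨_, foldHalf_castLE i⟩

lemma mem_range_funLeft_foldHalf_iff {R : Type*} [Semiring R] {v : Fin (2 * l) → R} :
    v ∈ range (funLeft R R foldHalf) ↔ ∀ j, v j.rev = v j := by
  constructor
  · rintro ⟨c, rfl⟩ j
    simp [foldHalf_rev]
  · intro hv
    refine ⟨v ∘ Fin.castLE (by omega), funext fun j => ?_⟩
    rcases castLE_foldHalf j with h | h <;> simp [h, hv]

lemma finrank_range_funLeft_foldHalf (K : Type*) [Field K] :
    Module.finrank K (range (funLeft K K (foldHalf (l := l)))) = l := by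
  rw [finrank_range_of_inj (funLeft_injective_of_surjective _ _ _ foldHalf_surjective),
    Module.finrank_fin_fun]

end FoldHalf

section Rows

variable {l : ℕ} (a b : Fin l → ℤ)

lemma row1_castLE (i : Fin l) : row1 a b (i.castLE (by omega)) = a i := by
  simp [row1]

lemma row2_castLE (i : Fin l) : row2 a b (i.castLE (by omega)) = b i := by
  have := i.isLt
  rw [row2, row1, dif_neg (by simp only [Fin.val_rev, Fin.val_castLE]; omega)]
  congr 1
  ext
  simp only [Fin.val_rev, Fin.val_castLE]
  omega

lemma row1_eq_ite (j : Fin (2 * l)) :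
    row1 a b j = if (j : ℕ) < l then a (foldHalf j) else b (foldHalf j) := by
  unfold row1 foldHalf
  split_ifs <;> rfl

lemma row1_add_row2 (j : Fin (2 * l)) :
    row1 a b j + row2 a b j = a (foldHalf j) + b (foldHalf j) := by
  have := j.isLt
  rw [row2, row1_eq_ite, row1_eq_ite, foldHalf_rev, Fin.val_rev]
  split_ifs <;> omega

variable {R : Type*} [Ring R]

lemma row1_mem_range_funLeft_foldHalf_iff [CharZero R] :
    (fun j => (row1 a b j : R)) ∈ range (funLeft R R foldHalf) ↔ ∀ i, a i = b i := by
  rw [mem_range_funLeft_foldHalf_iff]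
  constructor
  · intro h i
    have := h (i.castLE (by omega))
    rwa [← row2, row1_castLE, row2_castLE, Int.cast_inj, eq_comm] at this
  · intro h j
    obtain rfl : a = b := funext h
    simp only [row1_eq_ite, foldHalf_rev, ite_self]

lemma row2_mem_span_row1_sup_range :
    (fun j => (row2 a b j : R)) ∈
      span R {fun j => (row1 a b j : R)} ⊔ range (funLeft R R foldHalf) := by
  have : (fun j => (row2 a b j : R)) =
      funLeft R R foldHalf (fun i => (a i + b i : R)) - fun j => (row1 a b j : R) := by
    funext j
    rw [Pi.sub_apply, funLeft_apply, ← Int.cast_add, ← row1_add_row2 a b j, Int.cast_add,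
      add_sub_cancel_left]
  rw [this]
  exact sub_mem (mem_sup_right ⟨_, rfl⟩) (mem_sup_left (mem_span_singleton_self _))

lemma Bmat_eq_snoc :
    Bmat a b = Fin.snoc (α := fun _ => Fin (2 * l) → ℚ)
      (Fin.snoc (α := fun _ => Fin (2 * l) → ℚ)
        (fun i => funLeft ℚ ℚ foldHalf (Pi.single i 1)) fun j => (row1 a b j : ℚ))
      fun j => (row2 a b j : ℚ) := by
  ext i j
  induction i using Fin.lastCases with
  | last => simp [Bmat]
  | cast i =>
    induction i using Fin.lastCases with
    | last => simp [Bmat]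
    | cast i =>
      have := i.isLt
      simp [Bmat, Pi.single_apply, foldHalf_eq_iff, this]

lemma span_range_Bmat :
    span ℚ (Set.range (Bmat a b)) =
      range (funLeft ℚ ℚ foldHalf) ⊔ span ℚ {fun j => (row1 a b j : ℚ)} := by
  rw [Bmat_eq_snoc, Fin.range_snoc, Fin.range_snoc, span_insert_eq_span, span_insert,
    span_range_funLeft_single, sup_comm]
  rw [span_insert, span_range_funLeft_single]
  exact row2_mem_span_row1_sup_range a b

end Rows

/-- The rank of the `(l+2) × 2l` matrix `B` whose `i`-th row (`1 ≤ i ≤ l`) is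
`e_i + e_{2l−i+1}`, whose `(l+1)`-th row is the first row of `A` and whose `(l+2)`-th
row is the second row of `A`, equals `l` if `c_{i1} = c_{i2}` for all `i`, and `l+1`
otherwise. -/
theorem rank_Bmat {l : ℕ} (a b : Fin l → ℤ) :
    (Bmat a b).rank = (if ∀ i, a i = b i then l else l + 1) := by
  rw [Matrix.rank_eq_finrank_span_row, Matrix.row, span_range_Bmat]
  split_ifs with h
  · rw [sup_eq_left.mpr ((span_singleton_le_iff_mem _ _).mpr
      ((row1_mem_range_funLeft_foldHalf_iff a b).mpr h)), finrank_range_funLeft_foldHalf]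
  · rw [finrank_sup_span_singleton (mt (row1_mem_range_funLeft_foldHalf_iff a b).mp h),
      finrank_range_funLeft_foldHalf]
end

section
/- Let ψ: ℂ[x_1,...,x_n,t_1,...,t_m,t] → ℂ(t_1,...,t_m) be as above (x_i ↦ f_i/g_i, t ↦ 1/g, t_j ↦ t_j) and let H = ⟨1 − tg, g_i x_i − f_i : i⟩. If h ∈ ker(ψ) is linear in x_1,...,x_n, i.e., h = Σ_{i=1}^n α_i(t_1,...,t_m,t) x_i + α_0(t_1,...,t_m,t), then h ∈ H; indeed h = Σ_{i=1}^n α_i (x_i g_i − f_i) t g̃_i + (1 − tg) h, where g̃_i = g/g_i. -/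
open MvPolynomial Finset

/-- The ring homomorphism `ψ : ℂ[x₁,…,xₙ,t₁,…,tₘ,t] → ℂ(t₁,…,tₘ)` sending
`x_i ↦ f_i/g_i`, `t_j ↦ t_j` and `t ↦ 1/(g₁⋯gₙ)`.  The variables are indexed by
`Fin n ⊕ (Fin m ⊕ Unit)`: `Sum.inl i` is `x_i`, `Sum.inr (Sum.inl j)` is `t_j`, and
`Sum.inr (Sum.inr ())` is `t`. -/
noncomputable def psi {n m : ℕ} (f g : Fin n → MvPolynomial (Fin m) ℂ) :
    MvPolynomial (Fin n ⊕ (Fin m ⊕ Unit)) ℂ →+* FractionRing (MvPolynomial (Fin m) ℂ) :=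
  MvPolynomial.eval₂Hom
    ((algebraMap (MvPolynomial (Fin m) ℂ) (FractionRing (MvPolynomial (Fin m) ℂ))).comp
      (MvPolynomial.C))
    (fun v => match v with
      | Sum.inl i => algebraMap (MvPolynomial (Fin m) ℂ) _ (f i)
          / algebraMap (MvPolynomial (Fin m) ℂ) _ (g i)
      | Sum.inr (Sum.inl j) => algebraMap (MvPolynomial (Fin m) ℂ) _ (MvPolynomial.X j)
      | Sum.inr (Sum.inr _) => 1 / algebraMap (MvPolynomial (Fin m) ℂ) _ (∏ i, g i))

/-- The ideal `H = ⟨1 − t·g, g₁x₁ − f₁, …, gₙxₙ − fₙ⟩` in `ℂ[x₁,…,xₙ,t₁,…,tₘ,t]`,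
where `g = g₁⋯gₙ`. -/
noncomputable def Hideal {n m : ℕ} (f g : Fin n → MvPolynomial (Fin m) ℂ) :
    Ideal (MvPolynomial (Fin n ⊕ (Fin m ⊕ Unit)) ℂ) :=
  Ideal.span ({1 - X (Sum.inr (Sum.inr ())) * rename (Sum.inr ∘ Sum.inl) (∏ i, g i)} ∪
    Set.range (fun i => rename (Sum.inr ∘ Sum.inl) (g i) * X (Sum.inl i)
      - rename (Sum.inr ∘ Sum.inl) (f i)))

/-!
Modulo `H` the variable `t` inverts `g` and `gᵢxᵢ ≡ fᵢ`, so `g·h ≡ β` where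
`β = Σᵢ αᵢ fᵢ g̃ᵢ + g α₀` involves only `t₁,…,tₘ,t`; the same computation under `ψ` gives
`ψ(β) = g·ψ(h) = 0`. Viewing `β` as a polynomial in `t` over `S = ℂ[t₁,…,tₘ]`, it vanishes at
`1/g` in `Frac S`, so its reverse vanishes at `g` already in `S`, and therefore `β` vanishes at
every inverse of `g` in every `S`-algebra, in particular at `t` in `ℂ[x,t₁,…,tₘ,t]/H`.
Hence `g·h ∈ H`, and `h ∈ H` because `g` is a unit modulo `H`.
-/

namespace Polynomial

variable {R A : Type*} [CommSemiring R] [CommSemiring A]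

theorem eval₂_eq_zero_iff_of_mul_eq_one (i : R →+* A) {r : R} {u : A} (hu : i r * u = 1)
    (p : R[X]) : p.eval₂ i u = 0 ↔ i (p.reverse.eval r) = 0 := by
  let _ : Invertible u := invertibleOfLeftInverse u (i r) hu
  rw [← eval₂_reverse_eq_zero_iff, invOf_eq_left_inv hu, eval₂_at_apply]

theorem eval₂_eq_zero_of_injective_of_mul_eq_one {K : Type*} [CommSemiring K]
    (ι : R →+* K) (hι : Function.Injective ι) (φ : R →+* A) {r : R} {v : K} {u : A}
    (hv : ι r * v = 1) (hu : φ r * u = 1) {p : R[X]} (hp : p.eval₂ ι v = 0) :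
    p.eval₂ φ u = 0 := by
  have hrev : p.reverse.eval r = 0 :=
    (map_eq_zero_iff ι hι).1 ((eval₂_eq_zero_iff_of_mul_eq_one ι hv p).1 hp)
  rw [eval₂_eq_zero_iff_of_mul_eq_one φ hu, hrev, map_zero]

end Polynomial

namespace MvPolynomial

variable {R σ : Type*} [CommSemiring R]

noncomputable def toPolynomialOfSumUnit :
    MvPolynomial (σ ⊕ Unit) R →+* Polynomial (MvPolynomial σ R) :=
  eval₂Hom (Polynomial.C.comp C) (Sum.elim (fun j => Polynomial.C (X j)) fun _ => Polynomial.X)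

theorem eval₂_toPolynomialOfSumUnit {B : Type*} [CommSemiring B]
    (χ : MvPolynomial (σ ⊕ Unit) R →+* B) (c : MvPolynomial σ R →+* B)
    (hc : ∀ s, χ (rename Sum.inl s) = c s) (p : MvPolynomial (σ ⊕ Unit) R) :
    (toPolynomialOfSumUnit p).eval₂ c (χ (X (Sum.inr ()))) = χ p := by
  have hcomp : (Polynomial.eval₂RingHom c (χ (X (Sum.inr ())))).comp toPolynomialOfSumUnit
      = χ := by
    apply ringHom_ext
    · intro a
      simpa [toPolynomialOfSumUnit] using (hc (C a)).symm
    · rintro (j | ⟨⟩)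
      · simpa [toPolynomialOfSumUnit] using (hc (X j)).symm
      · simp [toPolynomialOfSumUnit]
  exact RingHom.congr_fun hcomp p

end MvPolynomial

section ClearingDenominators

variable {R ι σ : Type*} [CommRing R] [Fintype ι] [DecidableEq ι]

/-- `g · (Σᵢ αᵢ fᵢ / gᵢ + α₀)` with the denominators cleared. -/
noncomputable def clearedNumerator (f g : ι → MvPolynomial σ R)
    (α : ι → MvPolynomial (σ ⊕ Unit) R) (α₀ : MvPolynomial (σ ⊕ Unit) R) :
    MvPolynomial (σ ⊕ Unit) R :=
  (∑ i, α i * rename Sum.inl ((∏ j ∈ univ.erase i, g j) * f i)) + rename Sum.inl (∏ i, g i) * α₀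

theorem map_rename_prod_mul_eq_map_clearedNumerator {B : Type*} [CommRing B]
    (χ : MvPolynomial (ι ⊕ (σ ⊕ Unit)) R →+* B) (f g : ι → MvPolynomial σ R)
    (hχ : ∀ i, χ (rename (Sum.inr ∘ Sum.inl) (g i) * X (Sum.inl i)
      - rename (Sum.inr ∘ Sum.inl) (f i)) = 0)
    (α : ι → MvPolynomial (σ ⊕ Unit) R) (α₀ : MvPolynomial (σ ⊕ Unit) R) :
    χ (rename (Sum.inr ∘ Sum.inl) (∏ i, g i)) *
        χ ((∑ i, rename Sum.inr (α i) * X (Sum.inl i)) + rename Sum.inr α₀)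
      = χ (rename Sum.inr (clearedNumerator f g α α₀)) := by
  simp only [clearedNumerator, map_add, map_sum, map_mul, rename_rename, mul_add, mul_sum]
  congr 1
  refine sum_congr rfl fun i _ => ?_
  have hi := hχ i
  rw [← prod_erase_mul _ _ (mem_univ i)]
  simp only [map_sub, map_mul] at hi ⊢
  linear_combination
    χ (rename Sum.inr (α i)) * χ (rename (Sum.inr ∘ Sum.inl) (∏ j ∈ univ.erase i, g j)) * hi

end ClearingDenominators

theorem psi_rename_inr_inl {n m : ℕ} (f g : Fin n → MvPolynomial (Fin m) ℂ)
    (s : MvPolynomial (Fin m) ℂ) :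
    psi f g (rename (Sum.inr ∘ Sum.inl) s) = algebraMap _ _ s := by
  induction s using MvPolynomial.induction_on <;> simp_all [psi]

theorem psi_generator {n m : ℕ} (f g : Fin n → MvPolynomial (Fin m) ℂ) {i : Fin n}
    (hgi : g i ≠ 0) :
    psi f g (rename (Sum.inr ∘ Sum.inl) (g i) * X (Sum.inl i)
      - rename (Sum.inr ∘ Sum.inl) (f i)) = 0 := by
  have hgi' : algebraMap _ (FractionRing (MvPolynomial (Fin m) ℂ)) (g i) ≠ 0 := by
    simpa using hgi
  have hx : psi f g (X (Sum.inl i)) = algebraMap _ _ (f i) / algebraMap _ _ (g i) := by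
    simp [psi]
  rw [map_sub, map_mul, psi_rename_inr_inl, psi_rename_inr_inl, hx, mul_div_cancel₀ _ hgi',
    sub_self]

theorem algebraMap_prod_mul_psi_X {n m : ℕ} (f g : Fin n → MvPolynomial (Fin m) ℂ)
    (hg : ∀ i, g i ≠ 0) :
    algebraMap _ _ (∏ i, g i) * psi f g (X (Sum.inr (Sum.inr ()))) = 1 := by
  have hG : ∏ i, algebraMap _ (FractionRing (MvPolynomial (Fin m) ℂ)) (g i) ≠ 0 :=
    prod_ne_zero_iff.2 fun i _ => by simpa using hg i
  simpa [psi] using mul_inv_cancel₀ hG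

theorem generator_mem_Hideal {n m : ℕ} (f g : Fin n → MvPolynomial (Fin m) ℂ) (i : Fin n) :
    rename (Sum.inr ∘ Sum.inl) (g i) * X (Sum.inl i) - rename (Sum.inr ∘ Sum.inl) (f i)
      ∈ Hideal f g :=
  Ideal.subset_span (Or.inr ⟨i, rfl⟩)

theorem mk_rename_prod_mul_mk_X_eq_one {n m : ℕ} (f g : Fin n → MvPolynomial (Fin m) ℂ) :
    Ideal.Quotient.mk (Hideal f g) (rename (Sum.inr ∘ Sum.inl) (∏ i, g i)) *
      Ideal.Quotient.mk (Hideal f g) (X (Sum.inr (Sum.inr ()))) = 1 := by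
  have h₁ : Ideal.Quotient.mk (Hideal f g)
      (1 - X (Sum.inr (Sum.inr ())) * rename (Sum.inr ∘ Sum.inl) (∏ i, g i)) = 0 :=
    Ideal.Quotient.eq_zero_iff_mem.2 (Ideal.subset_span (Or.inl rfl))
  rw [map_sub, map_one, map_mul] at h₁
  linear_combination -h₁

/-- If `h ∈ ker(ψ)` is linear in `x₁,…,xₙ`, i.e.
`h = Σᵢ αᵢ(t₁,…,tₘ,t)·xᵢ + α₀(t₁,…,tₘ,t)`, then `h ∈ H`. -/
theorem linear_mem_Hideal {n m : ℕ} (f g : Fin n → MvPolynomial (Fin m) ℂ)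
    (hg : ∀ i, g i ≠ 0)
    (α : Fin n → MvPolynomial (Fin m ⊕ Unit) ℂ) (α₀ : MvPolynomial (Fin m ⊕ Unit) ℂ)
    (h : MvPolynomial (Fin n ⊕ (Fin m ⊕ Unit)) ℂ)
    (hh : h = (∑ i, rename Sum.inr (α i) * X (Sum.inl i)) + rename Sum.inr α₀)
    (hker : h ∈ RingHom.ker (psi f g)) :
    h ∈ Hideal f g := by
  set π := Ideal.Quotient.mk (Hideal f g)
  have hπ_unit := mk_rename_prod_mul_mk_X_eq_one f g
  set β := clearedNumerator f g α α₀
  have hψβ : psi f g (rename Sum.inr β) = 0 := by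
    rw [← map_rename_prod_mul_eq_map_clearedNumerator _ f g (fun i => psi_generator f g (hg i)),
      ← hh, RingHom.mem_ker.1 hker, mul_zero]
  have hπβ : π (rename Sum.inr β) = 0 := by
    have hψ := eval₂_toPolynomialOfSumUnit ((psi f g).comp (rename Sum.inr).toRingHom)
      (algebraMap _ _) (fun s => by simp [rename_rename, psi_rename_inr_inl]) β
    have hπ := eval₂_toPolynomialOfSumUnit (π.comp (rename Sum.inr).toRingHom)
      (π.comp (rename (Sum.inr ∘ Sum.inl)).toRingHom) (fun s => by simp [rename_rename]) β
    simp only [RingHom.comp_apply, AlgHom.toRingHom_eq_coe, RingHom.coe_coe, rename_X] at hψ hπ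
    rw [← hπ]
    exact Polynomial.eval₂_eq_zero_of_injective_of_mul_eq_one _ (IsFractionRing.injective _ _) _
      (algebraMap_prod_mul_psi_X f g hg) hπ_unit (hψ.trans hψβ)
  rw [← Ideal.Quotient.eq_zero_iff_mem]
  calc π h
      = π (X (Sum.inr (Sum.inr ()))) * (π (rename (Sum.inr ∘ Sum.inl) (∏ i, g i)) * π h) := by
        linear_combination (-π h) * hπ_unit
    _ = 0 := by
      rw [hh, map_rename_prod_mul_eq_map_clearedNumerator π f g
        (fun i => Ideal.Quotient.eq_zero_iff_mem.2 (generator_mem_Hideal f g i)), hπβ, mul_zero]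
end
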